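/- arXiv:2501.06898 — 2 statements merged into one kernel-verified Lean document; each statement's English description precedes it below -/
import Mathlib

section
/- If {U_k : k ∈ ℕ} is a point-finite family of cozero-sets of a Tychonoff space X and for each k, A_k ⊆ U_k is a zero-set, and additionally the A_k are pairwise disjoint, then ⋃_{k∈ℕ} A_k is a Coz_δ-set of X. -/
open Set Topology Filter

variable {X : Type*}

def IsZeroSet [TopologicalSpace X] (A : Set X) : Prop :=
  ∃ f : X → ℝ, Continuous f ∧ A = f ⁻¹' {0}

def IsCozeroSet [TopologicalSpace X] (O : Set X) : Prop := IsZeroSet Oᶜ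

def IsCozDelta [TopologicalSpace X] (A : Set X) : Prop :=
  ∃ W : ℕ → Set X, (∀ n, IsCozeroSet (W n)) ∧ A = ⋂ n, W n

def IsZerSigma [TopologicalSpace X] (A : Set X) : Prop :=
  ∃ Z : ℕ → Set X, (∀ n, IsZeroSet (Z n)) ∧ A = ⋃ n, Z n

def PointFinite {X ι : Type*} (A : ι → Set X) : Prop :=
  ∀ x : X, {i | x ∈ A i}.Finite

def StronglyPointFinite {ι : Type*} [TopologicalSpace X] (A : ι → Set X) : Prop :=
  ∃ U : ι → Set X, (∀ i, IsOpen (U i) ∧ A i ⊆ U i) ∧ PointFinite U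

lemma isCozeroSet_inter [TopologicalSpace X] {A B : Set X}
    (hA : IsCozeroSet A) (hB : IsCozeroSet B) : IsCozeroSet (A ∩ B) := by
  obtain ⟨f, hf, hfA⟩ := hA
  obtain ⟨g, hg, hgB⟩ := hB
  refine ⟨f * g, hf.mul hg, ?_⟩
  have h1 : ∀ x, x ∉ A ↔ f x = 0 := fun x => by
    rw [← Set.mem_compl_iff, hfA]; rfl
  have h2 : ∀ x, x ∉ B ↔ g x = 0 := fun x => by
    rw [← Set.mem_compl_iff, hgB]; rfl
  ext x
  rw [Set.mem_compl_iff, mem_inter_iff, not_and_or, h1 x, h2 x]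
  simp [mul_eq_zero]

lemma isCozeroSet_iUnion [TopologicalSpace X] {W : ℕ → Set X}
    (h : ∀ n, IsCozeroSet (W n)) : IsCozeroSet (⋃ n, W n) := by
  choose f hf hfW using h
  set g : ℕ → X → ℝ := fun n x => (1/2 : ℝ)^n * min |f n x| 1 with hg
  have hgc : ∀ n, Continuous (g n) := fun n =>
    continuous_const.mul (((hf n).abs).min continuous_const)
  have hg0 : ∀ n x, 0 ≤ g n x := fun n x => by
    apply mul_nonneg (by positivity)
    exact le_min (abs_nonneg _) zero_le_one
  have hbound : ∀ n x, ‖g n x‖ ≤ (1/2 : ℝ)^n := by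
    intro n x
    rw [Real.norm_eq_abs, abs_of_nonneg (hg0 n x)]
    calc (1/2 : ℝ)^n * min |f n x| 1 ≤ (1/2:ℝ)^n * 1 := by
          apply mul_le_mul_of_nonneg_left (min_le_right _ _) (by positivity)
      _ = (1/2:ℝ)^n := mul_one _
  have hbound' : ∀ n x, g n x ≤ (1/2:ℝ)^n := fun n x =>
    (le_abs_self _).trans (by rw [← Real.norm_eq_abs]; exact hbound n x)
  have hsum : ∀ x, Summable (fun n => g n x) := fun x =>
    Summable.of_nonneg_of_le (fun n => hg0 n x)
      (fun n => hbound' n x) summable_geometric_two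
  have hcont : Continuous fun x => ∑' n, g n x :=
    continuous_tsum hgc summable_geometric_two hbound
  refine ⟨_, hcont, ?_⟩
  have hmem : ∀ n x, x ∉ W n ↔ f n x = 0 := fun n x => by
    rw [← Set.mem_compl_iff, hfW]; rfl
  ext x
  simp only [mem_compl_iff, mem_iUnion, not_exists, mem_preimage, mem_singleton_iff]
  constructor
  · intro hx
    have : ∀ n, g n x = 0 := by
      intro n
      have : f n x = 0 := (hmem n x).mp (hx n)
      simp [hg, this]
    simp [this]
  · intro hx n
    rw [hmem n x]
    by_contra hne
    have hpos : 0 < g n x := by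
      apply mul_pos (by positivity)
      exact lt_min (abs_pos.mpr hne) one_pos
    have := Summable.le_tsum (hsum x) n (fun m _ => hg0 m x)
    linarith [hx ▸ this]

lemma isZeroSet_exists_cozdelta [TopologicalSpace X] {A : Set X} (hA : IsZeroSet A) :
    ∃ V : ℕ → Set X, (∀ n, IsCozeroSet (V n)) ∧ A = ⋂ n, V n := by
  obtain ⟨f, hf, hfA⟩ := hA
  refine ⟨fun n => {x | |f x| < 1/(n+1)}, fun n => ?_, ?_⟩
  · refine ⟨fun x => min |f x| (1/(n+1)) - 1/(n+1),
      (((hf.abs).min continuous_const).sub continuous_const), ?_⟩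
    ext x
    simp only [mem_compl_iff, mem_setOf_eq, not_lt, mem_preimage, mem_singleton_iff,
      sub_eq_zero, min_eq_right_iff]
  · ext x
    simp only [hfA, mem_preimage, mem_singleton_iff, mem_iInter, mem_setOf_eq]
    constructor
    · intro h n; rw [h]; simp; positivity
    · intro h
      by_contra hne
      obtain ⟨n, hn⟩ := exists_nat_one_div_lt (abs_pos.mpr hne)
      exact absurd (h n) (not_lt.mpr hn.le)

theorem union_zeroSets_isCozDelta {X : Type*} [TopologicalSpace X]
    [CompletelyRegularSpace X] [T1Space X]
    (U : ℕ → Set X) (A : ℕ → Set X)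
    (hU : ∀ k, IsCozeroSet (U k)) (hpf : PointFinite U)
    (hA : ∀ k, IsZeroSet (A k)) (hAU : ∀ k, A k ⊆ U k)
    (hdisj : Pairwise (Function.onFun Disjoint A)) :
    IsCozDelta (⋃ k, A k) := by
  choose V hVcoz hVeq using fun k => isZeroSet_exists_cozdelta (hA k)
  set W : ℕ → ℕ → Set X :=
    fun k j => Nat.rec (U k ∩ V k 0) (fun j Wj => Wj ∩ V k (j+1)) j with hW
  have hWsucc : ∀ k j, W k (j+1) = W k j ∩ V k (j+1) := fun k j => rfl
  have hWcoz : ∀ k j, IsCozeroSet (W k j) := by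
    intro k j
    induction j with
    | zero => exact isCozeroSet_inter (hU k) (hVcoz k 0)
    | succ j ih => exact isCozeroSet_inter ih (hVcoz k (j+1))
  have hWU : ∀ k j, W k j ⊆ U k := by
    intro k j
    induction j with
    | zero => exact inter_subset_left
    | succ j ih => exact inter_subset_left.trans ih
  have hWanti : ∀ k, Antitone (W k) := fun k =>
    antitone_nat_of_succ_le fun j => inter_subset_left
  have hWV : ∀ k j, W k j ⊆ V k j := by
    intro k j
    cases j with
    | zero => exact inter_subset_right
    | succ j => exact inter_subset_right
  have hAV : ∀ k j, A k ⊆ V k j := fun k j => by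
    rw [hVeq k]; exact iInter_subset _ j
  have hAW : ∀ k j, A k ⊆ W k j := by
    intro k j
    induction j with
    | zero => exact subset_inter (hAU k) (hAV k 0)
    | succ j ih => exact subset_inter ih (hAV k (j+1))
  have hWA : ∀ k, ⋂ j, W k j = A k := by
    intro k
    apply Subset.antisymm
    · intro x hx
      rw [hVeq k]
      exact mem_iInter.mpr fun j => hWV k j (mem_iInter.mp hx j)
    · exact subset_iInter fun j => hAW k j
  refine ⟨fun j => ⋃ k, W k j, fun j => isCozeroSet_iUnion (fun k => hWcoz k j), ?_⟩
  ext x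
  simp only [mem_iUnion, mem_iInter]
  constructor
  · rintro ⟨k, hk⟩ j
    exact ⟨k, hAW k j hk⟩
  · intro hx
    choose κ hκ using hx
    have hκU : ∀ j, κ j ∈ {k | x ∈ U k} := fun j => hWU (κ j) j (hκ j)
    have hF : ({k | x ∈ U k}).Finite := hpf x
    haveI := hF.to_subtype
    obtain ⟨y, hy⟩ := Finite.exists_infinite_fiber (fun j => (⟨κ j, hκU j⟩ : {k | x ∈ U k}))
    have hyInf : ((fun j => (⟨κ j, hκU j⟩ : {k | x ∈ U k})) ⁻¹' {y}).Infinite :=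
      Set.infinite_coe_iff.mp hy
    refine ⟨y.1, ?_⟩
    rw [← hWA y.1]
    refine mem_iInter.mpr fun j => ?_
    obtain ⟨j', hj'mem, hj'lt⟩ := hyInf.exists_gt j
    have hκj' : κ j' = y.1 := congrArg Subtype.val hj'mem
    exact hWanti y.1 hj'lt.le (hκj' ▸ hκ j')
end

section
/- Every pointwise limit of a sequence of continuous real-valued functions f : X → ℝ has the property that the preimage of every open interval (a, b) is a Zer_σ-set (a countable union of zero-sets). -/
open Set Topology Filter

variable {X : Type*}

lemma isZeroSet_preimage_Icc {X : Type*} [TopologicalSpace X] {g : X → ℝ}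
    (hg : Continuous g) (c d : ℝ) : IsZeroSet (g ⁻¹' Set.Icc c d) := by
  refine ⟨fun x => max (c - g x) 0 + max (g x - d) 0, by fun_prop, ?_⟩
  ext x
  simp only [Set.mem_preimage, Set.mem_Icc, Set.mem_singleton_iff]
  constructor
  · rintro ⟨h1, h2⟩
    rw [max_eq_right (by linarith), max_eq_right (by linarith)]
    ring
  · intro h
    have m1 : (0:ℝ) ≤ max (c - g x) 0 := le_max_right _ _
    have m2 : (0:ℝ) ≤ max (g x - d) 0 := le_max_right _ _
    have h1 : max (c - g x) 0 = 0 := by linarith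
    have h2 : max (g x - d) 0 = 0 := by linarith
    constructor
    · linarith [le_max_left (c - g x) (0:ℝ), h1]
    · linarith [le_max_left (g x - d) (0:ℝ), h2]

lemma isZeroSet_iInter {X : Type*} [TopologicalSpace X] {A : ℕ → Set X}
    (h : ∀ n, IsZeroSet (A n)) : IsZeroSet (⋂ n, A n) := by
  choose g hg hA using h
  set T : ℕ → X → ℝ := fun n x => (1/2 : ℝ) ^ n * min |g n x| 1 with hT
  have hTnonneg : ∀ n x, 0 ≤ T n x := fun n x =>
    mul_nonneg (by positivity) (le_min (abs_nonneg _) one_pos.le)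
  have hTle : ∀ n x, ‖T n x‖ ≤ (1/2 : ℝ) ^ n := by
    intro n x
    rw [Real.norm_eq_abs, abs_of_nonneg (hTnonneg n x)]
    calc (1/2 : ℝ) ^ n * min |g n x| 1 ≤ (1/2 : ℝ) ^ n * 1 :=
          mul_le_mul_of_nonneg_left (min_le_right _ _) (by positivity)
      _ = (1/2 : ℝ) ^ n := mul_one _
  have hsum : Summable fun n => (1/2 : ℝ) ^ n :=
    summable_geometric_of_lt_one (by norm_num) (by norm_num)
  have hSx : ∀ x, Summable fun n => T n x := fun x =>
    Summable.of_nonneg_of_le (fun n => hTnonneg n x)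
      (fun n => (Real.norm_eq_abs (T n x) ▸ abs_of_nonneg (hTnonneg n x)) ▸ hTle n x) hsum
  refine ⟨fun x => ∑' n, T n x, ?_, ?_⟩
  · exact continuous_tsum
      (fun n => (continuous_const.mul (((hg n).abs.min continuous_const)))) hsum hTle
  · ext x
    simp only [Set.mem_iInter, Set.mem_preimage, Set.mem_singleton_iff]
    constructor
    · intro hx
      have : ∀ n, T n x = 0 := by
        intro n
        have hxn := hx n
        rw [hA n] at hxn
        have : g n x = 0 := hxn
        simp [hT, this]
      exact Eq.trans (by exact tsum_congr this) tsum_zero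
    · intro hx n
      rw [hA n]
      have hle : T n x ≤ ∑' m, T m x := Summable.le_tsum (hSx x) n (fun j _ => hTnonneg j x)
      have hTn : T n x = 0 := le_antisymm (hx ▸ hle) (hTnonneg n x)
      have hmin : min |g n x| 1 = 0 := by
        have hpow : (0:ℝ) < (1/2 : ℝ) ^ n := by positivity
        rcases mul_eq_zero.mp hTn with h' | h'
        · exact absurd h' (ne_of_gt hpow)
        · exact h'
      have : |g n x| = 0 := by
        rcases min_eq_iff.mp hmin with ⟨h1, _⟩ | ⟨h1, _⟩
        · exact h1
        · norm_num at h1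
      simpa [Set.mem_preimage, abs_eq_zero] using abs_eq_zero.mp this

theorem baireOne_preimage_Ioo_zerSigma {X : Type*} [TopologicalSpace X]
    (f : X → ℝ) (fn : ℕ → X → ℝ) (hc : ∀ n, Continuous (fn n))
    (hlim : ∀ x, Filter.Tendsto (fun n => fn n x) Filter.atTop (nhds (f x))) :
    ∀ a b : ℝ, IsZerSigma (f ⁻¹' Set.Ioo a b) := by
  intro a b
  set c : ℕ → ℝ := fun m => a + 1 / (m + 1) with hcdef
  set d : ℕ → ℝ := fun m => b - 1 / (m + 1) with hddef
  set Z : ℕ → Set X := fun k =>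
    ⋂ j, fn (j + (Nat.pairEquiv.symm k).2) ⁻¹'
      Set.Icc (c (Nat.pairEquiv.symm k).1) (d (Nat.pairEquiv.symm k).1) with hZ
  refine ⟨Z, fun k => isZeroSet_iInter (fun j => isZeroSet_preimage_Icc (hc _) _ _), ?_⟩
  ext x
  simp only [Set.mem_preimage, Set.mem_Ioo, Set.mem_iUnion, hZ, Set.mem_iInter,
    Set.mem_Icc]
  constructor
  · rintro ⟨ha, hb⟩
    obtain ⟨m, hm⟩ := exists_nat_one_div_lt (show (0:ℝ) < min (f x - a) (b - f x) by
      simp [lt_min_iff]; constructor <;> linarith)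
    have hm1 : (1:ℝ) / (m + 1) < f x - a := lt_of_lt_of_le hm (min_le_left _ _)
    have hm2 : (1:ℝ) / (m + 1) < b - f x := lt_of_lt_of_le hm (min_le_right _ _)
    have hopen : ∀ᶠ n in atTop, fn n x ∈ Set.Ioo (c m) (d m) := by
      apply (hlim x).eventually
      apply Ioo_mem_nhds
      · simp only [hcdef]; linarith
      · simp only [hddef]; linarith
    obtain ⟨N, hN⟩ := eventually_atTop.mp hopen
    refine ⟨Nat.pairEquiv (m, N), ?_⟩
    intro j
    rw [Equiv.symm_apply_apply]
    have := hN (j + N) (Nat.le_add_left N j)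
    exact ⟨this.1.le, this.2.le⟩
  · rintro ⟨k, hk⟩
    set m := (Nat.pairEquiv.symm k).1
    set N := (Nat.pairEquiv.symm k).2
    have htend : Filter.Tendsto (fun j => fn (j + N) x) atTop (nhds (f x)) :=
      (hlim x).comp (tendsto_add_atTop_nat N)
    have h1 : c m ≤ f x := ge_of_tendsto' htend (fun j => (hk j).1)
    have h2 : f x ≤ d m := le_of_tendsto' htend (fun j => (hk j).2)
    have hpos : (0:ℝ) < 1 / (m + 1) := by positivity
    constructor
    · simp only [hcdef] at h1; linarith
    · simp only [hddef] at h2; linarith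
end
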